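/- Let R be a discrete valuation ring with uniformizer π, f ∈ R[X] monic of degree M with f(X) ≡ X^M mod π. Let g_(1),...,g_(n) ∈ R[X] be monic of degrees 1 ≤ m_(1) ≤ ... ≤ m_(n) with Res(g_(1),...,g_(n)) ≠ 0, t := val_π(Res(g_(1),...,g_(n))), t' := t − ∑_{j∈[1,n−1]}((n−j)m_(j) − 1), and s ≥ t + t' + 1 with f(X) ≡ ∏_k g_(k)(X) mod π^s. Then there exist monic polynomials g̃_(1),...,g̃_(n) ∈ R[X] with g̃_(k) ≡ g_(k) mod π^{s−t'} for all k and f(X) ≡ ∏_k g̃_(k)(X) mod π^{2(s−t')}; moreover val_π(Res(g̃_(1),...,g̃_(n))) = t for any such tuple. -/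

import Mathlib

open Polynomial Finset

/-- The global column position of an index in the block-structured resultant matrix. -/
def resPos {n : ℕ} {m : Fin n → ℕ} (q : (k : Fin n) × Fin (m k)) : ℕ :=
  (∑ j ∈ Finset.univ.filter (fun j => j < q.1), m j) + (q.2 : ℕ)

/-- The matrix `A(g_(1), …, g_(n))` whose block of `deg g_(k)` rows consists of the
successively shifted coefficient rows of `∏_{j ≠ k} g_(j)`. -/
noncomputable def resMatrix {R : Type*} [CommRing R] {n : ℕ} (g : Fin n → Polynomial R) :
    Matrix ((k : Fin n) × Fin ((g k).natDegree)) ((k : Fin n) × Fin ((g k).natDegree)) R :=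
  fun p q =>
    if (p.2 : ℕ) ≤ resPos q then
      (∏ j ∈ Finset.univ.erase p.1, g j).coeff (resPos q - (p.2 : ℕ))
    else 0

/-- The generalized resultant `Res(g_(1), …, g_(n)) = det A(g_(1), …, g_(n))`. -/
noncomputable def genRes {R : Type*} [CommRing R] {n : ℕ} (g : Fin n → Polynomial R) : R :=
  (resMatrix g).det

/-!
Write `m_k = deg g_k` (sorted) and `M = ∑ m_k`. Modulo `π` the product `∏ g_k` is `X ^ M`, so
every `g_k` is congruent to `X ^ {m_k}`, and a coefficient of `∏_{j ∈ T} g_j` in a degree below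
the degree of every subproduct of at least `#T - a` factors is divisible by `π ^ (a + 1)`. Hence all entries of the column
of the resultant matrix at position `b` are divisible by `π ^ w(b)`, where `w(b)` counts the
`r ∈ [1, n)` with `b < m_0 + ⋯ + m_{r-1}`. These weights are at most `n - 1` and add up to
`W = ∑_k (n - 1 - k) m_k`, so `π ^ (W - (n - 1)) = π ^ (t - t')` divides the adjugate, while the
determinant is `π ^ t` times a unit. Therefore the linear system expressing
`π ^ t' (f - ∏ g_k) / π ^ s` as `∑_k U_k ∏_{j ≠ k} g_j` with `deg U_k < m_k` is solvable, and
`g_k + π ^ (s - t') U_k` is the required lift by the first-order expansion of the product.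
Finally, the resultant of any lift differs from `Res(g)` by a multiple of `π ^ (s - t')`, and
`s - t' > t`.
-/

open Matrix

section Divisibility

variable {A ι : Type*} [CommRing A]

theorem dvd_prod_sub_prod {c : A} (s : Finset ι) {p q : ι → A}
    (h : ∀ i ∈ s, c ∣ p i - q i) : c ∣ ∏ i ∈ s, p i - ∏ i ∈ s, q i := by
  simp only [← Ideal.mem_span_singleton, ← Ideal.Quotient.eq, map_prod] at h ⊢
  exact prod_congr rfl h

theorem sq_dvd_prod_add_sub_sum [DecidableEq ι] {c : A} (s : Finset ι)
    (p δ : ι → A) (h : ∀ i ∈ s, c ∣ δ i) :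
    c ^ 2 ∣ ∏ i ∈ s, (p i + δ i) - ∏ i ∈ s, p i - ∑ i ∈ s, δ i * ∏ j ∈ s.erase i, p j := by
  induction s using Finset.induction with
  | empty => simp
  | insert k s hk ih =>
    have hrest : c ∣ ∏ j ∈ s, (p j + δ j) - ∏ j ∈ s, p j :=
      dvd_prod_sub_prod s fun j hj ↦ by simpa using h j (mem_insert_of_mem hj)
    have herase : ∀ j ∈ s, ∏ i ∈ (insert k s).erase j, p i = p k * ∏ i ∈ s.erase j, p i :=
      fun j hj ↦ by
        rw [erase_insert_of_ne (ne_of_mem_of_not_mem hj hk).symm,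
          prod_insert fun hmem ↦ hk (mem_of_mem_erase hmem)]
    rw [prod_insert hk, prod_insert hk, sum_insert hk, erase_insert hk, sum_congr rfl fun j hj ↦ by
      rw [herase j hj]]
    have key : (p k + δ k) * ∏ j ∈ s, (p j + δ j) - p k * ∏ j ∈ s, p j
        - (δ k * ∏ j ∈ s, p j + ∑ j ∈ s, δ j * (p k * ∏ i ∈ s.erase j, p i))
        = p k * (∏ j ∈ s, (p j + δ j) - ∏ j ∈ s, p j - ∑ j ∈ s, δ j * ∏ i ∈ s.erase j, p i)
          + δ k * (∏ j ∈ s, (p j + δ j) - ∏ j ∈ s, p j) := by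
      simp only [mul_left_comm _ (p k), ← mul_sum]
      ring
    rw [key]
    exact dvd_add ((ih fun j hj ↦ h j (mem_insert_of_mem hj)).mul_left _)
      (sq c ▸ mul_dvd_mul (h k (mem_insert_self k s)) hrest)

end Divisibility

section Adjugate

variable {A ι : Type*} [CommRing A] [Fintype ι] [DecidableEq ι]

theorem dvd_det_sub_det {c : A} {M N : Matrix ι ι A} (h : ∀ i j, c ∣ M i j - N i j) :
    c ∣ M.det - N.det := by
  simp only [← Ideal.mem_span_singleton, ← Ideal.Quotient.eq] at h ⊢
  rw [RingHom.map_det, RingHom.map_det]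
  congr 1
  ext i j
  exact h i j

theorem prod_dvd_det_of_dvd_col (M : Matrix ι ι A) (d : ι → A) (S : Finset ι)
    (h : ∀ i, ∀ j ∈ S, d j ∣ M i j) : ∏ j ∈ S, d j ∣ M.det := by
  rw [det_apply']
  refine dvd_sum fun σ _ ↦ Dvd.dvd.mul_left ?_ _
  exact (prod_dvd_prod_of_dvd _ _ fun j hj ↦ h _ j hj).trans
    (prod_dvd_prod_of_subset S univ _ S.subset_univ)

theorem prod_erase_dvd_adjugate (M : Matrix ι ι A) (d : ι → A) (h : ∀ i j, d j ∣ M i j)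
    (i j : ι) : ∏ k ∈ univ.erase i, d k ∣ M.adjugate i j := by
  rw [adjugate_apply]
  refine prod_dvd_det_of_dvd_col _ d _ fun p k hk ↦ ?_
  rcases eq_or_ne p j with rfl | hp
  · rw [updateRow_self, Pi.single_eq_of_ne (ne_of_mem_erase hk)]
    exact dvd_zero _
  · rw [updateRow_ne hp]
    exact h p k

theorem exists_vecMul_eq_smul_of_dvd_adjugate [NoZeroDivisors A] {M : Matrix ι ι A} {a d : A}
    (ha : a ≠ 0) (hadj : ∀ i j, a ∣ M.adjugate i j) (hdet : M.det = a * d) (y : ι → A) :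
    ∃ c, c ᵥ* M = d • y := by
  choose B hB using hadj
  have hadjB : M.adjugate = a • Matrix.of B := by ext i j; exact hB i j
  have key : a • (y ᵥ* Matrix.of B ᵥ* M) = a • (d • y) :=
    calc a • (y ᵥ* Matrix.of B ᵥ* M) = y ᵥ* M.adjugate ᵥ* M := by
          rw [hadjB, vecMul_smul, smul_vecMul]
      _ = y ᵥ* (M.adjugate * M) := vecMul_vecMul _ _ _
      _ = a • (d • y) := by rw [adjugate_mul, hdet, vecMul_smul, vecMul_one, smul_smul]
  exact ⟨y ᵥ* Matrix.of B, funext fun q ↦ mul_left_cancel₀ ha (by simpa using congrFun key q)⟩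

end Adjugate

section Polynomials

variable {R ι : Type*} [CommRing R]

theorem natDegree_eq_of_C_dvd_sub {c : R} {p q : R[X]} (hp : p.Monic) (hq : q.Monic)
    (h : C c ∣ p - q) (hc : ¬ IsUnit c) : p.natDegree = q.natDegree := by
  have hcoeff (i : ℕ) : c ∣ p.coeff i - q.coeff i := by
    simpa using (C_dvd_iff_dvd_coeff c _).mp h i
  by_contra hne
  rcases Ne.lt_or_gt hne with hlt | hlt
  · have := hcoeff q.natDegree
    rw [coeff_eq_zero_of_natDegree_lt hlt, hq.coeff_natDegree, zero_sub, dvd_neg] at this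
    exact hc (isUnit_of_dvd_one this)
  · have := hcoeff p.natDegree
    rw [coeff_eq_zero_of_natDegree_lt hlt, hp.coeff_natDegree, sub_zero] at this
    exact hc (isUnit_of_dvd_one this)

theorem dvd_coeff_of_C_dvd_prod_sub_X_pow [Fintype ι] {π : R} (hπ : Prime π) {g : ι → R[X]}
    (hg : ∀ k, (g k).Monic) {M : ℕ} (h : C π ∣ ∏ k, g k - X ^ M) (k : ι) (i : ℕ)
    (hi : i < (g k).natDegree) : π ∣ (g k).coeff i := by
  have : (Ideal.span {π}).IsPrime := (Ideal.span_singleton_prime hπ.ne_zero).mpr hπ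
  let φ := Ideal.Quotient.mk (Ideal.span {π})
  have hmap : ∏ k, (g k).map φ = X ^ M := by
    have : (∏ k, g k - X ^ M).map φ = 0 := by
      ext j
      rw [coeff_map, coeff_zero, Ideal.Quotient.eq_zero_iff_mem, Ideal.mem_span_singleton]
      exact (C_dvd_iff_dvd_coeff π _).mp h j
    rwa [Polynomial.map_sub, Polynomial.map_prod, Polynomial.map_pow, map_X, sub_eq_zero] at this
  obtain ⟨j, -, hassoc⟩ := (dvd_prime_pow prime_X M).mp (hmap ▸ dvd_prod_of_mem _ (mem_univ k))
  have hX : (g k).map φ = X ^ j := eq_of_monic_of_associated ((hg k).map φ) (monic_X_pow j) hassoc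
  have hj : j = (g k).natDegree := by simpa [hX] using (hg k).natDegree_map φ
  have := congrArg (coeff · i) hX
  simp only [coeff_map, coeff_X_pow, if_neg (hj ▸ hi.ne)] at this
  rwa [Ideal.Quotient.eq_zero_iff_mem, Ideal.mem_span_singleton] at this

theorem pow_succ_dvd_coeff_prod [DecidableEq ι] {π : R} {g : ι → R[X]}
    (hg : ∀ j, ∀ i < (g j).natDegree, π ∣ (g j).coeff i) (T : Finset ι) (a b : ℕ)
    (hb : ∀ U ⊆ T, #T ≤ #U + a → b < ∑ j ∈ U, (g j).natDegree) :
    π ^ (a + 1) ∣ (∏ j ∈ T, g j).coeff b := by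
  induction T using Finset.induction generalizing a b with
  | empty => simpa using hb ∅ le_rfl
  | insert k T hk ih =>
    rw [prod_insert hk, coeff_mul]
    refine dvd_sum fun x hx ↦ ?_
    rw [HasAntidiagonal.mem_antidiagonal] at hx
    rcases lt_trichotomy x.1 (g k).natDegree with hlt | heq | hgt
    · rcases a.eq_zero_or_pos with rfl | ha
      · exact (pow_one π).symm ▸ (hg k _ hlt).mul_right _
      · have hrest : π ^ a ∣ (∏ j ∈ T, g j).coeff x.2 := by
          refine Nat.sub_add_cancel ha ▸ ih (a - 1) x.2 fun U hU hcard ↦ ?_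
          refine lt_of_le_of_lt (by omega) (hb U (hU.trans (subset_insert k T)) ?_)
          rw [card_insert_of_notMem hk]
          omega
        exact pow_succ' π a ▸ mul_dvd_mul (hg k _ hlt) hrest
    · refine (ih a x.2 fun U hU hcard ↦ ?_).mul_left _
      have hkU : k ∉ U := fun h ↦ hk (hU h)
      have := hb (insert k U) (insert_subset_insert k hU) (by
        rw [card_insert_of_notMem hk, card_insert_of_notMem hkU]; omega)
      rw [sum_insert hkU] at this
      omega
    · simp [coeff_eq_zero_of_natDegree_lt hgt]

theorem exists_monic_lift [Fintype ι] [DecidableEq ι] {f h : R[X]}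
    {g U : ι → R[X]} (a e : R) (hg : ∀ k, (g k).Monic) (hU : ∀ k, (U k).degree < (g k).natDegree)
    (hf : f - ∏ k, g k = C (a * e) * h) (hsum : ∑ k, U k * ∏ j ∈ univ.erase k, g j = C e * h) :
    ∃ g' : ι → R[X], (∀ k, (g' k).Monic) ∧ (∀ k, C a ∣ g' k - g k) ∧
      C (a ^ 2) ∣ f - ∏ k, g' k := by
  refine ⟨fun k ↦ g k + C a * U k, fun k ↦ ?_, fun k ↦ ⟨U k, by ring⟩, ?_⟩
  · nontriviality R
    refine (hg k).add_of_left ?_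
    rw [C_mul', degree_eq_natDegree (hg k).ne_zero]
    exact (degree_smul_le a _).trans_lt (hU k)
  have hlin : ∑ k, C a * U k * ∏ j ∈ univ.erase k, g j = f - ∏ k, g k := by
    simp only [mul_assoc, ← mul_sum, hsum, hf, C_mul]
  have key : f - ∏ k, (g k + C a * U k) = -(∏ k, (g k + C a * U k) - ∏ k, g k
      - ∑ k, C a * U k * ∏ j ∈ univ.erase k, g j) := by
    rw [hlin]
    ring
  rw [key, dvd_neg, C_pow]
  exact sq_dvd_prod_add_sub_sum univ g _ fun k _ ↦ dvd_mul_right _ _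

end Polynomials

section ColumnWeights

variable {n : ℕ}

theorem Monotone.sum_filter_lt_card_le_sum {m : Fin n → ℕ} (hm : Monotone m)
    (U : Finset (Fin n)) :
    ∑ j ∈ univ.filter (fun j : Fin n ↦ (j : ℕ) < #U), m j ≤ ∑ j ∈ U, m j := by
  rcases (#U).eq_zero_or_pos with h0 | hpos
  · simp [h0]
  set L := univ.filter (fun j : Fin n ↦ (j : ℕ) < #U)
  have hUn : #U ≤ n := by simpa using card_le_univ U
  have hcard : #(L \ U) = #(U \ L) := by
    refine card_sdiff_comm ?_
    rw [Fin.card_filter_val_lt]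
    omega
  -- every index of `L \ U` lies below `#U - 1`, every index of `U \ L` above it
  let c : Fin n := ⟨#U - 1, by omega⟩
  have hlow : ∑ j ∈ L \ U, m j ≤ #(L \ U) • m c :=
    sum_le_card_nsmul _ _ _ fun j hj ↦ hm (by
      have := (mem_filter.mp (mem_sdiff.mp hj).1).2
      simp only [Fin.le_def, c]; omega)
  have hhigh : #(U \ L) • m c ≤ ∑ j ∈ U \ L, m j :=
    card_nsmul_le_sum _ _ _ fun j hj ↦ hm (by
      have := (mem_sdiff.mp hj).2
      simp only [L, mem_filter, mem_univ, true_and, not_lt] at this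
      simp only [Fin.le_def, c]; omega)
  rw [← sum_inter_add_sum_sdiff L U, ← sum_inter_add_sum_sdiff U L, inter_comm]
  rw [hcard] at hlow
  omega

theorem resPos_eq_finSigmaFinEquiv {m : Fin n → ℕ} (q : (k : Fin n) × Fin (m k)) :
    resPos q = finSigmaFinEquiv q := by
  rw [finSigmaFinEquiv_apply, resPos]
  congr 1
  symm
  refine sum_bij (fun i _ ↦ Fin.castLE q.1.2.le i) ?_ ?_ ?_ ?_
  · intro i _
    simp [← Fin.val_fin_lt]
  · intro i _ j _ h
    exact Fin.castLE_injective _ h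
  · intro j hj
    simp only [mem_filter, mem_univ, true_and, ← Fin.val_fin_lt] at hj
    exact ⟨⟨j, hj⟩, mem_univ _, rfl⟩
  · intro i _
    rfl

theorem sum_comp_resPos {m : Fin n → ℕ} {M : Type*} [AddCommMonoid M] (F : ℕ → M) :
    ∑ q : (k : Fin n) × Fin (m k), F (resPos q) = ∑ b ∈ range (∑ j, m j), F b := by
  simp_rw [resPos_eq_finSigmaFinEquiv]
  rw [Equiv.sum_comp finSigmaFinEquiv (fun i ↦ F i), Fin.sum_univ_eq_sum_range]

theorem exists_resPos_eq {m : Fin n → ℕ} {b : ℕ} (hb : b < ∑ j, m j) :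
    ∃ q : (k : Fin n) × Fin (m k), resPos q = b :=
  ⟨finSigmaFinEquiv.symm ⟨b, hb⟩, by simp [resPos_eq_finSigmaFinEquiv]⟩

def sumBelow (m : Fin n → ℕ) (r : ℕ) : ℕ :=
  ∑ j ∈ univ.filter (fun j : Fin n ↦ (j : ℕ) < r), m j

def colWeight (m : Fin n → ℕ) (b : ℕ) : ℕ :=
  #{r ∈ Ico 1 n | b < sumBelow m r}

theorem sumBelow_mono (m : Fin n → ℕ) : Monotone (sumBelow m) := fun _ _ hr ↦
  sum_le_sum_of_subset fun j ↦ by simp only [mem_filter, mem_univ, true_and]; omega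

theorem colWeight_le (m : Fin n → ℕ) (b : ℕ) : colWeight m b ≤ n - 1 :=
  (card_filter_le _ _).trans (Nat.card_Ico 1 n).le

theorem lt_sumBelow_of_colWeight_pos {m : Fin n → ℕ} {b : ℕ} (hb : 0 < colWeight m b) :
    b < sumBelow m (n - colWeight m b) := by
  by_contra! hle
  have hsub : {r ∈ Ico 1 n | b < sumBelow m r} ⊆ Ico (n - colWeight m b + 1) n := by
    intro r hr
    simp only [mem_filter, mem_Ico] at hr ⊢
    by_contra! hrw
    exact (sumBelow_mono m (by omega : r ≤ n - colWeight m b)).trans hle |>.not_gt hr.2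
  have := card_le_card hsub
  rw [Nat.card_Ico] at this
  unfold colWeight at hb this
  omega

theorem sum_colWeight (m : Fin n → ℕ) :
    ∑ b ∈ range (∑ j, m j), colWeight m b = ∑ k : Fin n, (n - (k + 1)) * m k := by
  have hle (r : ℕ) : sumBelow m r ≤ ∑ j, m j := sum_le_sum_of_subset (filter_subset _ _)
  calc ∑ b ∈ range (∑ j, m j), colWeight m b
      = ∑ r ∈ Ico 1 n, #{b ∈ range (∑ j, m j) | b < sumBelow m r} := by
        simp only [colWeight, card_filter]
        exact sum_comm
    _ = ∑ r ∈ Ico 1 n, sumBelow m r := by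
        refine sum_congr rfl fun r _ ↦ ?_
        have : {b ∈ range (∑ j, m j) | b < sumBelow m r} = range (sumBelow m r) := by
          ext b
          simp only [mem_filter, mem_range]
          have := hle r
          omega
        rw [this, card_range]
    _ = ∑ k : Fin n, (n - (k + 1)) * m k := by
        simp only [sumBelow, sum_filter]
        rw [sum_comm]
        refine sum_congr rfl fun k _ ↦ ?_
        have : {r ∈ Ico 1 n | (k : ℕ) < r} = Ico ((k : ℕ) + 1) n := by
          ext r
          simp only [mem_filter, mem_Ico]
          omega
        rw [← sum_filter, this, sum_const, Nat.card_Ico, smul_eq_mul]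

theorem sum_filter_succ_lt_tsub_one {m : Fin n → ℕ} (hm : ∀ k, 1 ≤ m k) :
    ∑ k ∈ univ.filter (fun k : Fin n ↦ (k : ℕ) + 1 < n), ((n - ((k : ℕ) + 1)) * m k - 1)
      = ∑ k : Fin n, (n - (k + 1)) * m k - (n - 1) := by
  have hcard : #(univ.filter fun k : Fin n ↦ (k : ℕ) + 1 < n) = n - 1 := by
    rw [filter_congr fun (k : Fin n) _ ↦ show (k : ℕ) + 1 < n ↔ (k : ℕ) < n - 1 by omega,
      Fin.card_filter_val_lt]
    omega
  rw [sum_tsub_distrib _ fun k hk ↦ Nat.one_le_iff_ne_zero.mpr <| mul_ne_zero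
      (by simp only [mem_filter] at hk; omega) (by have := hm k; omega),
    sum_filter_of_ne fun k _ hk ↦ by contrapose! hk; simp [Nat.sub_eq_zero_of_le hk],
    sum_const, hcard, smul_eq_mul, mul_one]

end ColumnWeights

section ResultantMatrix

variable {R : Type*} [CommRing R] {n : ℕ}

theorem pow_colWeight_dvd_resMatrix {π : R} {g : Fin n → R[X]}
    (hsort : Monotone fun k ↦ (g k).natDegree)
    (hco : ∀ j, ∀ i < (g j).natDegree, π ∣ (g j).coeff i) (p q) :
    π ^ colWeight (fun k ↦ (g k).natDegree) (resPos q) ∣ resMatrix g p q := by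
  set w := colWeight (fun k ↦ (g k).natDegree) (resPos q)
  unfold resMatrix
  split_ifs
  · rcases w.eq_zero_or_pos with hw | hw
    · rw [hw, pow_zero]
      exact one_dvd _
    have hlt := lt_sumBelow_of_colWeight_pos hw
    refine Nat.sub_add_cancel hw ▸ pow_succ_dvd_coeff_prod hco _ (w - 1) _ fun U _ hcard ↦ ?_
    rw [card_erase_of_mem (mem_univ _), card_univ, Fintype.card_fin] at hcard
    calc resPos q - p.2 ≤ resPos q := Nat.sub_le _ _
      _ < sumBelow _ (n - w) := hlt
      _ ≤ sumBelow _ #U := sumBelow_mono _ (by omega)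
      _ ≤ ∑ j ∈ U, (g j).natDegree := hsort.sum_filter_lt_card_le_sum U
  · exact dvd_zero _

theorem pow_dvd_genRes {π : R} {g : Fin n → R[X]} (hsort : Monotone fun k ↦ (g k).natDegree)
    (hco : ∀ j, ∀ i < (g j).natDegree, π ∣ (g j).coeff i) :
    π ^ ∑ k : Fin n, (n - (k + 1)) * (g k).natDegree ∣ genRes g := by
  have := prod_dvd_det_of_dvd_col (resMatrix g) _ univ fun p q _ ↦
    pow_colWeight_dvd_resMatrix hsort hco p q
  rwa [prod_pow_eq_pow_sum, sum_comp_resPos, sum_colWeight] at this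

theorem pow_dvd_adjugate_resMatrix {π : R} {g : Fin n → R[X]}
    (hsort : Monotone fun k ↦ (g k).natDegree)
    (hco : ∀ j, ∀ i < (g j).natDegree, π ∣ (g j).coeff i) (p q) :
    π ^ (∑ k : Fin n, (n - (k + 1)) * (g k).natDegree - (n - 1)) ∣ (resMatrix g).adjugate p q := by
  have h := prod_erase_dvd_adjugate (resMatrix g) _ (pow_colWeight_dvd_resMatrix hsort hco) p q
  rw [prod_pow_eq_pow_sum] at h
  refine (pow_dvd_pow π ?_).trans h
  have hsplit := add_sum_erase univ
    (fun q ↦ colWeight (fun k ↦ (g k).natDegree) (resPos q)) (mem_univ p)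
  rw [sum_comp_resPos (fun b ↦ colWeight (fun k ↦ (g k).natDegree) b), sum_colWeight] at hsplit
  have := colWeight_le (fun k ↦ (g k).natDegree) (resPos p)
  omega

theorem coeff_sum_mul_prod_erase (g : Fin n → R[X])
    (c : ((k : Fin n) × Fin ((g k).natDegree)) → R) (b : ℕ) :
    (∑ k, (∑ i : Fin (g k).natDegree, C (c ⟨k, i⟩) * X ^ (i : ℕ)) * ∏ j ∈ univ.erase k, g j).coeff b
      = ∑ p, c p * if (p.2 : ℕ) ≤ b then (∏ j ∈ univ.erase p.1, g j).coeff (b - p.2) else 0 := by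
  simp only [finsetSum_coeff, sum_mul, mul_assoc, coeff_C_mul, coeff_X_pow_mul']
  exact (Fintype.sum_sigma (fun p : (k : Fin n) × Fin ((g k).natDegree) ↦ c p *
    if (p.2 : ℕ) ≤ b then (∏ j ∈ univ.erase p.1, g j).coeff (b - p.2) else 0)).symm

/-- The resultant matrix is the matrix of `(U_k)_k ↦ ∑_k U_k ∏_{j ≠ k} g_j` on tuples with
`deg U_k < deg g_k`: row `⟨k, i⟩` is the coefficient of `X ^ i` in `U_k`, column `q` the
coefficient of `X ^ resPos q` in the sum. -/
theorem exists_sum_mul_prod_erase_eq (g : Fin n → R[X]) {d : R} {h : R[X]}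
    (hh : h.degree < ↑(∑ k, (g k).natDegree)) {c : ((k : Fin n) × Fin ((g k).natDegree)) → R}
    (hc : c ᵥ* resMatrix g = d • fun q ↦ h.coeff (resPos q)) :
    ∃ U : Fin n → R[X], (∀ k, (U k).degree < (g k).natDegree) ∧
      ∑ k, U k * ∏ j ∈ univ.erase k, g j = C d * h := by
  refine ⟨fun k ↦ ∑ i : Fin (g k).natDegree, C (c ⟨k, i⟩) * X ^ (i : ℕ), fun k ↦ ?_, ?_⟩
  · refine (degree_sum_le _ _).trans_lt ((Finset.sup_lt_iff (WithBot.bot_lt_coe _)).mpr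
      fun i _ ↦ (degree_C_mul_X_pow_le _ _).trans_lt (by exact_mod_cast i.2))
  ext b
  rw [coeff_sum_mul_prod_erase, coeff_C_mul]
  by_cases hb : b < ∑ k, (g k).natDegree
  · obtain ⟨q, rfl⟩ := exists_resPos_eq hb
    simpa [vecMul, dotProduct, resMatrix] using congrFun hc q
  rw [(degree_lt_iff_coeff_zero h _).mp hh b (not_lt.mp hb), mul_zero]
  refine sum_eq_zero fun p _ ↦ ?_
  split_ifs
  · rw [coeff_eq_zero_of_natDegree_lt, mul_zero]
    have := natDegree_prod_le (univ.erase p.1) g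
    have := add_sum_erase univ (fun k ↦ (g k).natDegree) (mem_univ p.1)
    have := p.2.2
    omega
  · exact mul_zero _

theorem dvd_genRes_sub_genRes {g g' : Fin n → R[X]} {c : R}
    (hd : ∀ k, (g' k).natDegree = (g k).natDegree) (hcong : ∀ k, C c ∣ g' k - g k) :
    c ∣ genRes g' - genRes g := by
  let e : ((k : Fin n) × Fin ((g' k).natDegree)) ≃ ((k : Fin n) × Fin ((g k).natDegree)) :=
    Equiv.sigmaCongrRight fun k ↦ finCongr (hd k)
  have hfst (q) : (e.symm q).1 = q.1 := rfl
  have hsnd (q) : ((e.symm q).2 : ℕ) = q.2 := rfl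
  have hpos (q) : resPos (e.symm q) = resPos q := by
    simp only [resPos, hfst, hsnd]
    exact congrArg (· + (q.2 : ℕ)) (sum_congr rfl fun j _ ↦ hd j)
  rw [genRes, genRes, ← det_reindex_self e]
  refine dvd_det_sub_det fun p q ↦ ?_
  simp only [reindex_apply, submatrix_apply, resMatrix, hpos, hfst, hsnd]
  split_ifs
  · have := dvd_prod_sub_prod (univ.erase p.1) fun j _ ↦ hcong j
    simpa using (C_dvd_iff_dvd_coeff c _).mp this (resPos q - p.2)
  · simp

theorem pow_dvd_genRes_and_not_of_congr {π : R} (hπ : ¬ IsUnit π) {g g' : Fin n → R[X]}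
    (hg : ∀ k, (g k).Monic) (hg' : ∀ k, (g' k).Monic) {r t : ℕ} (htr : t < r)
    (hcong : ∀ k, C (π ^ r) ∣ g' k - g k) (ht : π ^ t ∣ genRes g ∧ ¬ π ^ (t + 1) ∣ genRes g) :
    π ^ t ∣ genRes g' ∧ ¬ π ^ (t + 1) ∣ genRes g' := by
  have hr : ¬ IsUnit (π ^ r) := by rwa [isUnit_pow_iff (by omega)]
  have hdiff := (pow_dvd_pow π htr).trans <|
    dvd_genRes_sub_genRes (fun k ↦ natDegree_eq_of_C_dvd_sub (hg' k) (hg k) (hcong k) hr) hcong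
  exact ⟨(dvd_sub_left ht.1).mp ((pow_dvd_pow π t.le_succ).trans hdiff),
    fun h' ↦ ht.2 ((dvd_sub_right h').mp hdiff)⟩

end ResultantMatrix

section DVR

variable {R : Type*} [CommRing R] [IsDomain R] [IsDiscreteValuationRing R] {π : R}

theorem exists_eq_pow_mul_unit (hπ : Irreducible π) {x : R} {t : ℕ} (h : π ^ t ∣ x)
    (h' : ¬ π ^ (t + 1) ∣ x) : ∃ u : Rˣ, x = π ^ t * u := by
  obtain ⟨e, rfl⟩ := h
  have he : ¬ π ∣ e := fun ⟨r, hr⟩ ↦ h' ⟨r, by rw [hr]; ring⟩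
  have hu : IsUnit e := by
    by_contra hne
    have := (IsLocalRing.mem_maximalIdeal e).mpr hne
    rw [hπ.maximalIdeal_eq, Ideal.mem_span_singleton] at this
    exact he this
  exact ⟨hu.unit, rfl⟩

theorem exists_vecMul_resMatrix_eq {n : ℕ} (hπ : Irreducible π) {g : Fin n → R[X]}
    (hdeg : ∀ k, 1 ≤ (g k).natDegree) (hsort : Monotone fun k ↦ (g k).natDegree)
    (hco : ∀ j, ∀ i < (g j).natDegree, π ∣ (g j).coeff i) {t : ℕ}
    (ht : π ^ t ∣ genRes g ∧ ¬ π ^ (t + 1) ∣ genRes g)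
    (y : (k : Fin n) × Fin ((g k).natDegree) → R) :
    ∃ c, c ᵥ* resMatrix g = π ^ (t - ∑ k ∈ univ.filter (fun k : Fin n ↦ (k : ℕ) + 1 < n),
      ((n - ((k : ℕ) + 1)) * (g k).natDegree - 1)) • y := by
  rw [sum_filter_succ_lt_tsub_one hdeg]
  set W := ∑ k : Fin n, (n - (k + 1)) * (g k).natDegree
  have hWt : W ≤ t := by
    by_contra!
    exact ht.2 ((pow_dvd_pow π this).trans (pow_dvd_genRes hsort hco))
  obtain ⟨ε, hε⟩ := exists_eq_pow_mul_unit hπ ht.1 ht.2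
  obtain ⟨c, hc⟩ := exists_vecMul_eq_smul_of_dvd_adjugate (pow_ne_zero _ hπ.ne_zero)
    (pow_dvd_adjugate_resMatrix hsort hco) (d := π ^ (t - (W - (n - 1))) * ε)
    (by rw [← genRes, hε, ← mul_assoc, ← pow_add]; congr 2; omega) (((ε⁻¹ : Rˣ) : R) • y)
  refine ⟨c, hc.trans ?_⟩
  rw [smul_smul, mul_assoc, Units.mul_inv, mul_one]

end DVR

theorem hensel_step_special_general
    {R : Type*} [CommRing R] [IsDomain R] [IsDiscreteValuationRing R]
    (π : R) (hπ : Irreducible π)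
    (f : Polynomial R) (hf : f.Monic)
    (hfX : C π ∣ (f - X ^ f.natDegree))
    {n : ℕ} (g : Fin n → Polynomial R)
    (hmonic : ∀ k, (g k).Monic) (hdeg : ∀ k, 1 ≤ (g k).natDegree)
    (hsort : Monotone fun k => (g k).natDegree)
    (t : ℕ) (ht : π ^ t ∣ genRes g ∧ ¬ π ^ (t + 1) ∣ genRes g)
    (t' : ℕ)
    (ht' : t' = t - ∑ k ∈ Finset.univ.filter (fun k : Fin n => (k : ℕ) + 1 < n),
        ((n - ((k : ℕ) + 1)) * (g k).natDegree - 1))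
    (s : ℕ) (hs : t + t' + 1 ≤ s)
    (hcongr : C (π ^ s) ∣ (f - ∏ k, g k)) :
    (∃ g' : Fin n → Polynomial R, (∀ k, (g' k).Monic) ∧
        (∀ k, C (π ^ (s - t')) ∣ (g' k - g k)) ∧
        C (π ^ (2 * (s - t'))) ∣ (f - ∏ k, g' k)) ∧
    (∀ g' : Fin n → Polynomial R, (∀ k, (g' k).Monic) →
        (∀ k, C (π ^ (s - t')) ∣ (g' k - g k)) →
        C (π ^ (2 * (s - t'))) ∣ (f - ∏ k, g' k) →
        π ^ t ∣ genRes g' ∧ ¬ π ^ (t + 1) ∣ genRes g') := by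
  refine ⟨?_, fun g' hg' hcong _ ↦
    pow_dvd_genRes_and_not_of_congr hπ.not_isUnit hmonic hg' (by omega) hcong ht⟩
  have hprod : (∏ k, g k).Monic := monic_prod_of_monic _ _ fun k _ ↦ hmonic k
  have hdegprod : (∏ k, g k).natDegree = ∑ k, (g k).natDegree :=
    natDegree_prod_of_monic _ _ fun k _ ↦ hmonic k
  have hfdeg : f.natDegree = (∏ k, g k).natDegree := natDegree_eq_of_C_dvd_sub hf hprod hcongr
    ((isUnit_pow_iff (by omega)).not.mpr hπ.not_isUnit)
  have hprodX : C π ∣ ∏ k, g k - X ^ f.natDegree := by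
    rw [← sub_sub_sub_cancel_left (X ^ f.natDegree) (∏ k, g k) f]
    exact dvd_sub hfX ((_root_.map_dvd C (dvd_pow_self π (by omega))).trans hcongr)
  have hco := dvd_coeff_of_C_dvd_prod_sub_X_pow hπ.prime hmonic hprodX
  obtain ⟨h, hh⟩ := hcongr
  have hhdeg : h.degree < ↑(∑ k, (g k).natDegree) := by
    rw [← degree_C_mul (pow_ne_zero s hπ.ne_zero), ← hh, ← hdegprod, ← hfdeg,
      ← degree_eq_natDegree hf.ne_zero]
    refine degree_sub_lt_left ?_ hf.ne_zero (by rw [hf.leadingCoeff, hprod.leadingCoeff])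
    rw [degree_eq_natDegree hf.ne_zero, degree_eq_natDegree hprod.ne_zero, hfdeg]
  obtain ⟨c, hc⟩ := exists_vecMul_resMatrix_eq hπ hdeg hsort hco ht fun q ↦ h.coeff (resPos q)
  rw [← ht'] at hc
  obtain ⟨U, hU, hsum⟩ := exists_sum_mul_prod_erase_eq g hhdeg hc
  have := exists_monic_lift (π ^ (s - t')) (π ^ t') hmonic hU
    (by rw [hh, ← pow_add, Nat.sub_add_cancel (by omega)]) hsum
  simpa only [← pow_mul, mul_comm] using this

/-- **One Hensel lifting step with improved precision in the case `f ≡ X^M mod π`:**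
with `t = val_π(Res(g_(1), …, g_(n)))`, `t' = t − ∑_{j∈[1,n−1]}((n−j)m_(j) − 1)` and
`s ≥ t + t' + 1`, a factorisation `f ≡ ∏_k g_(k) mod π^s` admits monic lifts
`g̃_(k) ≡ g_(k) mod π^{s−t'}` with `f ≡ ∏_k g̃_(k) mod π^{2(s−t')}`; moreover every such
tuple satisfies `val_π(Res(g̃_(1), …, g̃_(n))) = t`. -/
theorem hensel_step_special
    {R : Type*} [CommRing R] [IsDomain R] [IsDiscreteValuationRing R]
    (π : R) (hπ : Irreducible π)
    (f : Polynomial R) (hf : f.Monic)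
    (hfX : C π ∣ (f - X ^ f.natDegree))
    {n : ℕ} (g : Fin n → Polynomial R)
    (hmonic : ∀ k, (g k).Monic) (hdeg : ∀ k, 1 ≤ (g k).natDegree)
    (hsort : Monotone fun k => (g k).natDegree)
    (hres : genRes g ≠ 0)
    (t : ℕ) (ht : π ^ t ∣ genRes g ∧ ¬ π ^ (t + 1) ∣ genRes g)
    (t' : ℕ)
    (ht' : t' = t - ∑ k ∈ Finset.univ.filter (fun k : Fin n => (k : ℕ) + 1 < n),
        ((n - ((k : ℕ) + 1)) * (g k).natDegree - 1))
    (s : ℕ) (hs : t + t' + 1 ≤ s)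
    (hcongr : C (π ^ s) ∣ (f - ∏ k, g k)) :
    (∃ g' : Fin n → Polynomial R, (∀ k, (g' k).Monic) ∧
        (∀ k, C (π ^ (s - t')) ∣ (g' k - g k)) ∧
        C (π ^ (2 * (s - t'))) ∣ (f - ∏ k, g' k)) ∧
    (∀ g' : Fin n → Polynomial R, (∀ k, (g' k).Monic) →
        (∀ k, C (π ^ (s - t')) ∣ (g' k - g k)) →
        C (π ^ (2 * (s - t'))) ∣ (f - ∏ k, g' k) →
        π ^ t ∣ genRes g' ∧ ¬ π ^ (t + 1) ∣ genRes g') :=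
  hensel_step_special_general π hπ f hf hfX g hmonic hdeg hsort t ht t' ht' s hs hcongr
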